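/- arXiv:1709.05648 — 7 statements merged into one kernel-verified Lean document; each statement's English description precedes it below -/
import Mathlib

section
/- Let (Ω,F,P) be a probability space, (E,𝔈) a measurable space, X, Xₙ : Ω → E measurable maps, and 𝔖 ⊆ 𝔈 a family of sets such that for every A ∈ 𝔈 and ε > 0 there exists S ∈ 𝔖 with P(X ∈ A Δ S) < ε. If (a) lim_{n→∞} P(X ∈ S and Xₙ ∉ S) = 0 for every S ∈ 𝔖, and (b) lim_{n→∞} P(Xₙ ∈ A) = P(X ∈ A) for every A ∈ 𝔈, then lim_{n→∞} P(X ∈ A and Xₙ ∉ A) = 0 for every A ∈ 𝔈. -/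
/-!
Pick `S ∈ 𝔖` with `P(X ∈ A ∆ S)` small. If `X ∈ A` and `Xₙ ∉ A`, then either `X ∈ A ∆ S`, or
`X ∈ S` and `Xₙ ∉ S`, or `Xₙ ∈ S \ A`. The first event is small by the choice of `S`, the second
vanishes in the limit by (a), and by (b) the third has limit `P(X ∈ S \ A) ≤ P(X ∈ A ∆ S)`.
-/

open MeasureTheory Filter Topology
open scoped ENNReal symmDiff

theorem ENNReal.tendsto_nhds_zero_of_forall_le_tendsto {ι : Type*} {l : Filter ι} {u : ι → ℝ≥0∞}
    (h : ∀ ε > 0, ∃ v : ι → ℝ≥0∞, ∃ c < ε, (∀ᶠ i in l, u i ≤ v i) ∧ Tendsto v l (𝓝 c)) :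
    Tendsto u l (𝓝 0) := by
  refine tendsto_order.2 ⟨fun a ha => absurd ha not_lt_zero, fun ε hε => ?_⟩
  obtain ⟨v, c, hcε, huv, hv⟩ := h ε hε
  filter_upwards [huv, (tendsto_order.1 hv).2 ε hcε] with i hui hvi
  exact hui.trans_lt hvi

theorem preimage_inter_preimage_compl_subset {Ω E : Type*} (f g : Ω → E) (A S : Set E) :
    f ⁻¹' A ∩ g ⁻¹' Aᶜ ⊆ f ⁻¹' (A ∆ S) ∪ (f ⁻¹' S ∩ g ⁻¹' Sᶜ) ∪ g ⁻¹' (S \ A) := by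
  rintro ω ⟨hfA, hgA⟩
  by_cases hfS : f ω ∈ S
  · by_cases hgS : g ω ∈ S
    · exact Or.inr ⟨hgS, hgA⟩
    · exact Or.inl (Or.inr ⟨hfS, hgS⟩)
  · exact Or.inl (Or.inl (Or.inl ⟨hfA, hfS⟩))

theorem measure_preimage_inter_preimage_compl_le {Ω E : Type*} [MeasurableSpace Ω]
    (μ : Measure Ω) (f g : Ω → E) (A S : Set E) :
    μ (f ⁻¹' A ∩ g ⁻¹' Aᶜ) ≤
      μ (f ⁻¹' (A ∆ S)) + μ (f ⁻¹' S ∩ g ⁻¹' Sᶜ) + μ (g ⁻¹' (S \ A)) :=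
  (measure_mono (preimage_inter_preimage_compl_subset f g A S)).trans
    ((measure_union_le _ _).trans (add_le_add_left (measure_union_le _ _) _))

theorem stmt0_general {Ω E : Type*} [MeasurableSpace Ω] [MeasurableSpace E]
    (P : Measure Ω)
    (X : Ω → E) (Xn : ℕ → Ω → E)
    (𝔖 : Set (Set E)) (h𝔖meas : ∀ S ∈ 𝔖, MeasurableSet S)
    (happrox : ∀ A : Set E, MeasurableSet A → ∀ ε : ℝ≥0∞, 0 < ε →
      ∃ S ∈ 𝔖, P (X ⁻¹' (symmDiff A S)) < ε)
    (ha : ∀ S ∈ 𝔖,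
      Tendsto (fun n => P (X ⁻¹' S ∩ Xn n ⁻¹' Sᶜ)) atTop (𝓝 0))
    (hb : ∀ A : Set E, MeasurableSet A →
      Tendsto (fun n => P (Xn n ⁻¹' A)) atTop (𝓝 (P (X ⁻¹' A)))) :
    ∀ A : Set E, MeasurableSet A →
      Tendsto (fun n => P (X ⁻¹' A ∩ Xn n ⁻¹' Aᶜ)) atTop (𝓝 0) := by
  intro A hA
  refine ENNReal.tendsto_nhds_zero_of_forall_le_tendsto fun ε hε => ?_
  obtain ⟨S, hS, hAS⟩ := happrox A hA (ε / 2) (ENNReal.half_pos hε.ne')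
  have hSA : P (X ⁻¹' (S \ A)) < ε / 2 :=
    (measure_mono (Set.preimage_mono (le_sup_right : S \ A ≤ A ∆ S))).trans_lt hAS
  refine ⟨_, P (X ⁻¹' (A ∆ S)) + 0 + P (X ⁻¹' (S \ A)), ?_,
    Eventually.of_forall fun n => measure_preimage_inter_preimage_compl_le P X (Xn n) A S,
    (tendsto_const_nhds.add (ha S hS)).add (hb _ ((h𝔖meas S hS).diff hA))⟩
  calc P (X ⁻¹' (A ∆ S)) + 0 + P (X ⁻¹' (S \ A)) < ε / 2 + ε / 2 := by
        rw [add_zero]; exact ENNReal.add_lt_add hAS hSA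
    _ = ε := ENNReal.add_halves ε

theorem stmt0 {Ω E : Type*} [MeasurableSpace Ω] [MeasurableSpace E]
    (P : Measure Ω) [IsProbabilityMeasure P]
    (X : Ω → E) (Xn : ℕ → Ω → E)
    (hX : Measurable X) (hXn : ∀ n, Measurable (Xn n))
    (𝔖 : Set (Set E)) (h𝔖meas : ∀ S ∈ 𝔖, MeasurableSet S)
    (happrox : ∀ A : Set E, MeasurableSet A → ∀ ε : ℝ≥0∞, 0 < ε →
      ∃ S ∈ 𝔖, P (X ⁻¹' (symmDiff A S)) < ε)
    (ha : ∀ S ∈ 𝔖,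
      Tendsto (fun n => P (X ⁻¹' S ∩ Xn n ⁻¹' Sᶜ)) atTop (𝓝 0))
    (hb : ∀ A : Set E, MeasurableSet A →
      Tendsto (fun n => P (Xn n ⁻¹' A)) atTop (𝓝 (P (X ⁻¹' A)))) :
    ∀ A : Set E, MeasurableSet A →
      Tendsto (fun n => P (X ⁻¹' A ∩ Xn n ⁻¹' Aᶜ)) atTop (𝓝 0) :=
  stmt0_general P X Xn 𝔖 h𝔖meas happrox ha hb
end

section
/- Let (E,𝒯) be a topological space and (Pₙ) a sequence of Borel probability measures on E converging pointwise on open sets to an outer regular Borel probability measure P, i.e. lim Pₙ(O) = P(O) for every open O. Then lim Pₙ(A) = P(A) for every Borel set A. -/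
/-! Outer regularity gives `limsup Pₙ(A) ≤ P(A)` for every Borel set `A`: squeeze `A` inside an
open `O` with `P(O \ A) < ε`, so that `limsup Pₙ(A) ≤ lim Pₙ(O) = P(O) ≤ P(A) + ε`. Applied to
`Aᶜ`, and since all measures have total mass one, the same bound yields `P(A) ≤ liminf Pₙ(A)`. -/

open MeasureTheory Filter Topology
open scoped ENNReal

theorem MeasureTheory.limsup_measure_le_of_forall_isOpen_superset
    {Ω ι : Type*} [TopologicalSpace Ω] [MeasurableSpace Ω] {L : Filter ι}
    {μ : Measure Ω} {μs : ι → Measure Ω} {A : Set Ω}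
    (houter : ∀ ε : ℝ≥0∞, 0 < ε → ∃ O : Set Ω, IsOpen O ∧ A ⊆ O ∧ μ (O \ A) < ε)
    (hopen : ∀ O : Set Ω, IsOpen O → Tendsto (fun i => μs i O) L (𝓝 (μ O))) :
    L.limsup (fun i => μs i A) ≤ μ A := by
  rcases L.eq_or_neBot with rfl | hL
  · simp
  refine ENNReal.le_of_forall_pos_le_add fun ε hε _ => ?_
  obtain ⟨O, hO, hAO, hOA⟩ := houter ε (by exact_mod_cast hε)
  calc L.limsup (fun i => μs i A)
      ≤ L.limsup (fun i => μs i O) := limsup_le_limsup (.of_forall fun _ => measure_mono hAO)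
    _ = μ (A ∪ O \ A) := by rw [(hopen O hO).limsup_eq, Set.union_sdiff_cancel hAO]
    _ ≤ μ A + μ (O \ A) := measure_union_le _ _
    _ ≤ μ A + ε := by gcongr

theorem stmt2_general {E : Type*} [TopologicalSpace E] [MeasurableSpace E]
    (P : Measure E) [IsProbabilityMeasure P]
    (Pn : ℕ → Measure E) (hPn : ∀ n, IsProbabilityMeasure (Pn n))
    (houter : ∀ A : Set E, MeasurableSet A → ∀ ε : ℝ≥0∞, 0 < ε →
      ∃ O : Set E, IsOpen O ∧ A ⊆ O ∧ P (O \ A) < ε)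
    (hopen : ∀ O : Set E, IsOpen O → Tendsto (fun n => Pn n O) atTop (𝓝 (P O))) :
    ∀ A : Set E, MeasurableSet A → Tendsto (fun n => Pn n A) atTop (𝓝 (P A)) := by
  intro A hA
  have hlimsup : ∀ B, MeasurableSet B → atTop.limsup (fun n => Pn n B) ≤ P B := fun B hB =>
    limsup_measure_le_of_forall_isOpen_superset (houter B hB) hopen
  exact tendsto_of_le_liminf_of_limsup_le
    (le_measure_liminf_of_limsup_measure_compl_le hA (hlimsup _ hA.compl)) (hlimsup A hA)

theorem stmt2 {E : Type*} [TopologicalSpace E] [MeasurableSpace E] [BorelSpace E]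
    (P : Measure E) [IsProbabilityMeasure P]
    (Pn : ℕ → Measure E) (hPn : ∀ n, IsProbabilityMeasure (Pn n))
    (houter : ∀ A : Set E, MeasurableSet A → ∀ ε : ℝ≥0∞, 0 < ε →
      ∃ O : Set E, IsOpen O ∧ A ⊆ O ∧ P (O \ A) < ε)
    (hopen : ∀ O : Set E, IsOpen O → Tendsto (fun n => Pn n O) atTop (𝓝 (P O))) :
    ∀ A : Set E, MeasurableSet A → Tendsto (fun n => Pn n A) atTop (𝓝 (P A)) :=
  stmt2_general P Pn hPn houter hopen
end

section
/- Let (Ω,F,P) be a probability space, (E,d) a metric space, and X, Xₙ : Ω → E measurable. Suppose (a) Xₙ → X in (outer) probability, i.e. lim P*(d(X,Xₙ) ≥ ε) = 0 for all ε > 0, and (b) lim P(Xₙ ∈ O) = P(X ∈ O) for all open O ⊆ E. Then lim E|f(X) − f(Xₙ)| = 0 for every bounded Borel measurable f : E → ℝ. -/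
/-!
By Lusin's theorem `f` is continuous on a closed set `F` with `P(X ∉ F)` small, and by Tietze's
theorem `f` restricted to `F` extends to a bounded continuous `g` with the same bound `C`.
Convergence in probability gives `g(Xₙ) → g(X)` in `L¹` (dominated convergence along a.e.
convergent subsequences). Replacing `f` by `g` costs at most `2C (P(X ∉ F) + P(Xₙ ∉ F))`, and
hypothesis (b) for the open set `Fᶜ` makes `P(Xₙ ∉ F)` tend to `P(X ∉ F)`.
-/

open MeasureTheory Filter Topology Set
open scoped ENNReal BoundedContinuousFunction

theorem tendsto_zero_of_forall_le_tendsto_lt {ι : Type*} {l : Filter ι} {a : ι → ℝ}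
    (ha : ∀ i, 0 ≤ a i)
    (h : ∀ η > 0, ∃ (b : ι → ℝ) (c : ℝ), (∀ i, a i ≤ b i) ∧ Tendsto b l (𝓝 c) ∧ c < η) :
    Tendsto a l (𝓝 0) := by
  refine tendsto_order.2 ⟨fun η hη => .of_forall fun i => hη.trans_le (ha i), fun η hη => ?_⟩
  obtain ⟨b, c, hab, hb, hc⟩ := h η hη
  exact (hb.eventually_lt_const hc).mono fun i hi => (hab i).trans_lt hi

theorem abs_sub_le_abs_sub_add_indicator {E : Type*} {f g : E → ℝ} {F : Set E} {C : ℝ}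
    (hfg : EqOn f g F) (hf : ∀ x, |f x| ≤ C) (hg : ∀ x, |g x| ≤ C) (x y : E) :
    |f x - f y| ≤
      |g x - g y| + Fᶜ.indicator (fun _ => 2 * C) x + Fᶜ.indicator (fun _ => 2 * C) y := by
  have hdev : ∀ z, |f z - g z| ≤ Fᶜ.indicator (fun _ => 2 * C) z := by
    intro z
    by_cases hz : z ∈ F
    · simp [hz, hfg hz]
    · rw [indicator_of_mem (show z ∈ Fᶜ from hz)]
      linarith [abs_sub (f z) (g z), hf z, hg z]
  calc |f x - f y| = |(f x - g x) + (g x - g y) - (f y - g y)| := by ring_nf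
    _ ≤ |f x - g x| + |g x - g y| + |f y - g y| := by
        linarith [abs_sub ((f x - g x) + (g x - g y)) (f y - g y),
          abs_add_le (f x - g x) (g x - g y)]
    _ ≤ _ := by linarith [hdev x, hdev y]

theorem ContinuousOn.exists_boundedContinuous_eqOn_abs_le {E : Type*} [TopologicalSpace E]
    [NormalSpace E] {F : Set E} {f : E → ℝ} (hf : ContinuousOn f F) (hF : IsClosed F) {C : ℝ}
    (hC : 0 ≤ C) (hfC : ∀ x ∈ F, |f x| ≤ C) : ∃ g : E →ᵇ ℝ, EqOn f g F ∧ ∀ x, |g x| ≤ C := by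
  let f' : F →ᵇ ℝ := .ofNormedAddCommGroup (F.domRestrict f) hf.domRestrict C fun x => hfC x x.2
  obtain ⟨g, hgC, hgf⟩ := BoundedContinuousFunction.exists_forall_mem_domRestrict_eq_of_closed
    f' hF (t := Icc (-C) C) (fun x => abs_le.1 (hfC x x.2)) ⟨0, by simp [hC]⟩
  exact ⟨g, fun x hx => (DFunLike.congr_fun hgf ⟨x, hx⟩).symm, fun x => abs_le.2 (hgC x)⟩

namespace MeasureTheory

section Regular

variable {E : Type*} [TopologicalSpace E] [NormalSpace E] [MeasurableSpace E] [BorelSpace E]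
  {μ : Measure E}

theorem Integrable.exists_seq_boundedContinuous_tendsto_ae [μ.WeaklyRegular] {f : E → ℝ}
    (hf : Integrable f μ) :
    ∃ g : ℕ → E →ᵇ ℝ, ∀ᵐ x ∂μ, Tendsto (fun n => g n x) atTop (𝓝 (f x)) := by
  choose g hg _ using fun n : ℕ =>
    (memLp_one_iff_integrable.2 hf).exists_boundedContinuous_eLpNorm_sub_le ENNReal.one_ne_top
      (ENNReal.inv_ne_zero.2 (ENNReal.natCast_ne_top n))
  have hL1 : Tendsto (fun n => eLpNorm ((g n : E → ℝ) - f) 1 μ) atTop (𝓝 0) := by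
    refine tendsto_of_tendsto_of_tendsto_of_le_of_le tendsto_const_nhds
      ENNReal.tendsto_inv_nat_nhds_zero (fun _ => zero_le) fun n => ?_
    rw [eLpNorm_sub_comm]
    exact hg n
  obtain ⟨ns, -, hae⟩ := (tendstoInMeasure_of_tendsto_eLpNorm one_ne_zero
    (fun n => (g n).continuous.aestronglyMeasurable) hf.aestronglyMeasurable
      hL1).exists_seq_tendsto_ae
  exact ⟨fun k => g (ns k), hae⟩

theorem Integrable.exists_isClosed_measure_compl_lt_continuousOn [IsFiniteMeasure μ]
    [μ.WeaklyRegular] {f : E → ℝ} (hf : Measurable f) (hfi : Integrable f μ) {ε : ℝ}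
    (hε : 0 < ε) : ∃ F, IsClosed F ∧ μ Fᶜ < ENNReal.ofReal ε ∧ ContinuousOn f F := by
  obtain ⟨g, hg⟩ := hfi.exists_seq_boundedContinuous_tendsto_ae
  obtain ⟨t, ht, hμt, hunif⟩ := tendstoUniformlyOn_of_ae_tendsto'
    (fun n => (g n).continuous.stronglyMeasurable) hf.stronglyMeasurable hg (half_pos hε)
  obtain ⟨F, hFt, hF, hμF⟩ := ht.compl.exists_isClosed_sdiff_lt (measure_ne_top μ _)
    (ENNReal.ofReal_pos.2 (half_pos hε)).ne'
  refine ⟨F, hF, ?_,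
    (hunif.continuousOn (.of_forall fun n => (g n).continuous.continuousOn)).mono hFt⟩
  calc μ Fᶜ ≤ μ (t ∪ tᶜ \ F) :=
        measure_mono fun x hx => (em (x ∈ t)).imp id fun h => ⟨h, hx⟩
    _ ≤ μ t + μ (tᶜ \ F) := measure_union_le _ _
    _ < ENNReal.ofReal (ε / 2) + ENNReal.ofReal (ε / 2) :=
        ENNReal.add_lt_add_of_le_of_lt (measure_ne_top μ t) hμt hμF
    _ = ENNReal.ofReal ε := by rw [← ENNReal.ofReal_add, add_halves] <;> positivity

end Regular

theorem TendstoInMeasure.tendsto_integral_abs_sub_comp {Ω E : Type*} [MeasurableSpace Ω]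
    {P : Measure Ω} [IsFiniteMeasure P] [PseudoEMetricSpace E] [MeasurableSpace E]
    [OpensMeasurableSpace E] {X : Ω → E} {Xn : ℕ → Ω → E}
    (hconv : TendstoInMeasure P Xn atTop X) (hX : AEMeasurable X P)
    (hXn : ∀ n, AEMeasurable (Xn n) P) (g : E →ᵇ ℝ) :
    Tendsto (fun n => ∫ ω, |g (X ω) - g (Xn n ω)| ∂P) atTop (𝓝 0) := by
  refine tendsto_of_subseq_tendsto fun ns hns => ?_
  obtain ⟨ms, -, hae⟩ := (hconv.comp hns).exists_seq_tendsto_ae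
  refine ⟨ms, ?_⟩
  have hlim := tendsto_integral_of_dominated_convergence (μ := P)
    (F := fun n ω => |g (X ω) - g (Xn (ns (ms n)) ω)|) (fun _ => 2 * ‖g‖)
    (fun n => ((g.continuous.measurable.comp_aemeasurable hX).sub
      (g.continuous.measurable.comp_aemeasurable (hXn _))).abs.aestronglyMeasurable)
    (integrable_const _)
    (fun n => .of_forall fun ω => by
      simpa [Real.dist_eq] using g.dist_le_two_norm (X ω) (Xn (ns (ms n)) ω))
    (hae.mono fun ω hω => ((g.continuous.tendsto _).comp hω).const_sub (g (X ω)) |>.abs)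
  simpa using hlim

theorem integral_abs_sub_comp_le_of_eqOn {Ω E : Type*} [MeasurableSpace Ω]
    {P : Measure Ω} [IsFiniteMeasure P] [MeasurableSpace E] {f g : E → ℝ} {F : Set E} {C : ℝ}
    (hF : MeasurableSet F) (hfg : EqOn f g F) (hf : ∀ x, |f x| ≤ C) (hg : Measurable g)
    (hgC : ∀ x, |g x| ≤ C) {X Y : Ω → E} (hX : Measurable X) (hY : Measurable Y) :
    ∫ ω, |f (X ω) - f (Y ω)| ∂P ≤
      ∫ ω, |g (X ω) - g (Y ω)| ∂P + 2 * C * P.real (X ⁻¹' Fᶜ) + 2 * C * P.real (Y ⁻¹' Fᶜ) := by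
  have hgint : Integrable (fun ω => |g (X ω) - g (Y ω)|) P :=
    .of_bound ((hg.comp hX).sub (hg.comp hY)).abs.aestronglyMeasurable (2 * C)
      (.of_forall fun ω => by
        simpa [Real.norm_eq_abs, two_mul] using
          (abs_sub _ _).trans (add_le_add (hgC (X ω)) (hgC (Y ω))))
  have hind : ∀ {Z : Ω → E}, Measurable Z →
      Integrable ((Z ⁻¹' Fᶜ).indicator fun _ => 2 * C) P :=
    fun hZ => (integrable_const _).indicator (hZ hF.compl)
  have hgXint : Integrable
      (fun ω => |g (X ω) - g (Y ω)| + (X ⁻¹' Fᶜ).indicator (fun _ => 2 * C) ω) P :=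
    hgint.add (hind hX)
  calc ∫ ω, |f (X ω) - f (Y ω)| ∂P
      ≤ ∫ ω, |g (X ω) - g (Y ω)| + (X ⁻¹' Fᶜ).indicator (fun _ => 2 * C) ω
          + (Y ⁻¹' Fᶜ).indicator (fun _ => 2 * C) ω ∂P :=
        integral_mono_of_nonneg (.of_forall fun _ => abs_nonneg _)
          (hgXint.add (hind hY))
          (.of_forall fun ω => abs_sub_le_abs_sub_add_indicator hfg hf hgC (X ω) (Y ω))
    _ = _ := by
        rw [integral_add hgXint (hind hY), integral_add hgint (hind hX),
          integral_indicator_const _ (hX hF.compl), integral_indicator_const _ (hY hF.compl),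
          smul_eq_mul, smul_eq_mul, mul_comm (P.real _), mul_comm (P.real _)]

end MeasureTheory

theorem stmt5 {Ω E : Type*} [MeasurableSpace Ω] [MetricSpace E]
    [MeasurableSpace E] [BorelSpace E]
    (P : Measure Ω) [IsProbabilityMeasure P]
    (X : Ω → E) (Xn : ℕ → Ω → E)
    (hX : Measurable X) (hXn : ∀ n, Measurable (Xn n))
    (ha : ∀ ε : ℝ, 0 < ε →
      Tendsto (fun n => P {ω | ε ≤ dist (X ω) (Xn n ω)}) atTop (𝓝 0))
    (hb : ∀ O : Set E, IsOpen O →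
      Tendsto (fun n => P (Xn n ⁻¹' O)) atTop (𝓝 (P (X ⁻¹' O)))) :
    ∀ f : E → ℝ, Measurable f → (∃ C : ℝ, ∀ x, |f x| ≤ C) →
      Tendsto (fun n => ∫ ω, |f (X ω) - f (Xn n ω)| ∂P) atTop (𝓝 0) := by
  rintro f hf ⟨C, hC⟩
  have hC0 : 0 ≤ C := (abs_nonneg _).trans (hC (X (nonempty_of_isProbabilityMeasure P).some))
  have hconv : TendstoInMeasure P Xn atTop X :=
    tendstoInMeasure_iff_dist.2 fun ε hε => by simpa only [dist_comm] using ha ε hε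
  refine tendsto_zero_of_forall_le_tendsto_lt (fun n => integral_nonneg fun _ => abs_nonneg _)
    fun η hη => ?_
  have hη' : 0 < η / (4 * C + 1) := by positivity
  have : IsProbabilityMeasure (P.map X) := Measure.isProbabilityMeasure_map hX.aemeasurable
  obtain ⟨F, hF, hμF, hfF⟩ := (Integrable.of_bound (μ := P.map X) hf.aestronglyMeasurable C
    (.of_forall hC)).exists_isClosed_measure_compl_lt_continuousOn hf hη'
  obtain ⟨g, hgf, hgC⟩ := hfF.exists_boundedContinuous_eqOn_abs_le hF hC0 fun x _ => hC x
  have hpX : P.real (X ⁻¹' Fᶜ) < η / (4 * C + 1) := by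
    rw [Measure.map_apply hX hF.isOpen_compl.measurableSet] at hμF
    exact ENNReal.toReal_lt_of_lt_ofReal hμF
  have hpXn : Tendsto (fun n => P.real (Xn n ⁻¹' Fᶜ)) atTop (𝓝 (P.real (X ⁻¹' Fᶜ))) :=
    (ENNReal.tendsto_toReal (measure_ne_top _ _)).comp (hb _ hF.isOpen_compl)
  refine ⟨_, 0 + 2 * C * P.real (X ⁻¹' Fᶜ) + 2 * C * P.real (X ⁻¹' Fᶜ),
    fun n => integral_abs_sub_comp_le_of_eqOn hF.measurableSet hgf hC
      g.continuous.measurable hgC hX (hXn n),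
    (((hconv.tendsto_integral_abs_sub_comp hX.aemeasurable (fun n => (hXn n).aemeasurable)
      g).add_const _).add (hpXn.const_mul _)), ?_⟩
  have hp0 : 0 ≤ P.real (X ⁻¹' Fᶜ) := measureReal_nonneg
  rw [lt_div_iff₀ (by positivity)] at hpX
  nlinarith
end

section
/- Let (E,d) be a metric space, (Ω,F,P) a probability space, and X, Xₙ : Ω → E measurable with X(Ω) separable. If lim P(X ∈ O, Xₙ ∉ O) = 0 for every open O ⊆ E, then lim P(d(X,Xₙ) ≥ ε) = 0 for every ε > 0. -/
open MeasureTheory Filter Topology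
open scoped ENNReal

theorem stmt7 {Ω E : Type*} [MeasurableSpace Ω] [MetricSpace E]
    [MeasurableSpace E] [BorelSpace E]
    (P : Measure Ω) [IsProbabilityMeasure P]
    (X : Ω → E) (Xn : ℕ → Ω → E)
    (hX : Measurable X) (hXn : ∀ n, Measurable (Xn n))
    (hsep : TopologicalSpace.IsSeparable (Set.range X))
    (h : ∀ O : Set E, IsOpen O →
      Tendsto (fun n => P (X ⁻¹' O ∩ Xn n ⁻¹' Oᶜ)) atTop (𝓝 0)) :
    ∀ ε : ℝ, 0 < ε →
      Tendsto (fun n => P {ω | ε ≤ dist (X ω) (Xn n ω)}) atTop (𝓝 0) := by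
  intro ε hε
  rw [ENNReal.tendsto_atTop_zero]
  intro δ hδ
  have hΩ : Nonempty Ω := by
    by_contra h'
    rw [not_nonempty_iff] at h'
    have h1 : (P Set.univ) = 1 := measure_univ
    rw [Set.univ_eq_empty_iff.mpr h', measure_empty] at h1
    exact zero_ne_one h1
  obtain ⟨c, hc_count, hc_sub⟩ := hsep
  have hc_ne : c.Nonempty := by
    rcases hΩ with ⟨ω⟩
    have hx : X ω ∈ closure c := hc_sub ⟨ω, rfl⟩
    rcases c.eq_empty_or_nonempty with h0 | h1
    · rw [h0, closure_empty] at hx; exact absurd hx (Set.notMem_empty _)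
    · exact h1
  obtain ⟨f, hf⟩ := hc_count.exists_eq_range hc_ne
  set A : ℕ → Set E := fun i => Metric.ball (f i) (ε/2) with hA
  have hcover : ∀ ω, ∃ i, X ω ∈ A i := by
    intro ω
    have hx : X ω ∈ closure c := hc_sub ⟨ω, rfl⟩
    rw [Metric.mem_closure_iff] at hx
    obtain ⟨y, hy, hlt⟩ := hx (ε/2) (by linarith)
    rw [hf] at hy
    obtain ⟨i, rfl⟩ := hy
    exact ⟨i, by simpa [A, Metric.mem_ball, dist_comm] using hlt⟩
  set T : ℕ → Set Ω := fun m => ⋃ i ∈ Finset.range (m+1), X ⁻¹' A i with hT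
  have hTmeas : ∀ m, MeasurableSet (T m) := fun m =>
    Finset.measurableSet_biUnion _ (fun i _ => hX (Metric.isOpen_ball).measurableSet)
  have hTmono : Monotone T := by
    intro a b hab
    apply Set.biUnion_subset_biUnion_left
    intro i hi
    exact (Finset.range_subset_range.mpr (by omega)) hi
  have hTunion : (⋃ m, T m) = Set.univ := by
    ext ω
    simp only [Set.mem_iUnion, Set.mem_univ, iff_true]
    obtain ⟨i, hi⟩ := hcover ω
    exact ⟨i, Set.mem_biUnion (Finset.self_mem_range_succ i) hi⟩
  have htend : Tendsto (fun m => P ((T m)ᶜ)) atTop (𝓝 0) := by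
    have h0 : P (⋂ m, (T m)ᶜ) = 0 := by
      rw [← Set.compl_iUnion, hTunion, Set.compl_univ, measure_empty]
    have := MeasureTheory.tendsto_measure_iInter_atTop (μ := P)
      (fun m => (hTmeas m).compl.nullMeasurableSet)
      (fun a b hab => Set.compl_subset_compl.mpr (hTmono hab))
      ⟨0, measure_ne_top _ _⟩
    rwa [h0] at this
  obtain ⟨m, hm⟩ := (ENNReal.tendsto_atTop_zero.mp htend) (δ/2) (ENNReal.half_pos hδ.ne')
  have hsum : Tendsto (fun n => ∑ i ∈ Finset.range (m+1),
      P (X ⁻¹' A i ∩ Xn n ⁻¹' (A i)ᶜ)) atTop (𝓝 0) := by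
    have := tendsto_finset_sum (Finset.range (m+1))
      (fun i (_ : i ∈ Finset.range (m+1)) => h (A i) Metric.isOpen_ball)
    simpa using this
  obtain ⟨N, hN⟩ := (ENNReal.tendsto_atTop_zero.mp hsum) (δ/2) (ENNReal.half_pos hδ.ne')
  refine ⟨N, fun n hn => ?_⟩
  have hincl : {ω | ε ≤ dist (X ω) (Xn n ω)} ⊆
      (T m)ᶜ ∪ ⋃ i ∈ Finset.range (m+1), (X ⁻¹' A i ∩ Xn n ⁻¹' (A i)ᶜ) := by
    intro ω hω
    by_cases hT' : ω ∈ T m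
    · right
      simp only [hT, Set.mem_iUnion] at hT'
      simp only [Set.mem_iUnion]
      obtain ⟨i, hi, hXi⟩ := hT'
      refine ⟨i, hi, hXi, ?_⟩
      intro hXni
      have h1 : dist (X ω) (f i) < ε/2 := Metric.mem_ball.mp hXi
      have h2 : dist (Xn n ω) (f i) < ε/2 := Metric.mem_ball.mp hXni
      have h3 := dist_triangle_right (X ω) (Xn n ω) (f i)
      have hge : ε ≤ dist (X ω) (Xn n ω) := hω
      linarith
    · exact Or.inl hT'
  calc P {ω | ε ≤ dist (X ω) (Xn n ω)}
      ≤ P ((T m)ᶜ ∪ ⋃ i ∈ Finset.range (m+1), (X ⁻¹' A i ∩ Xn n ⁻¹' (A i)ᶜ)) :=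
        measure_mono hincl
    _ ≤ P ((T m)ᶜ) + P (⋃ i ∈ Finset.range (m+1), (X ⁻¹' A i ∩ Xn n ⁻¹' (A i)ᶜ)) :=
        measure_union_le _ _
    _ ≤ P ((T m)ᶜ) + ∑ i ∈ Finset.range (m+1), P (X ⁻¹' A i ∩ Xn n ⁻¹' (A i)ᶜ) := by
        gcongr
        exact measure_biUnion_finset_le _ _
    _ ≤ δ/2 + δ/2 := add_le_add (hm m le_rfl) (hN n hn)
    _ = δ := ENNReal.add_halves δ
end

section
/- Let (E,d) be a metric space, (Ω,F,P) a probability space, and X, Xₙ : Ω → E measurable such that the law of X is outer regular and X(Ω \ N) is Lindelöf (as a subspace of E) for some P-null set N. If lim P*(d(X,Xₙ) ≥ ε) = 0 for all ε > 0, then lim P(X ∈ O, Xₙ ∉ O) = 0 for every open O ⊆ E. -/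
open MeasureTheory Filter Topology Metric
open scoped ENNReal

/-!
If `X ∈ O` but `Xₙ ∉ O`, then either `d(X, Xₙ) ≥ δ`, or `X` lies in the `δ`-thickening of the
closed set `Oᶜ` but not in `Oᶜ` itself. The first event has vanishing probability as `n → ∞`;
the second has probability `μ (thickening δ Oᶜ \ Oᶜ)`, `μ` the law of `X`, which tends to `0` as
`δ → 0⁺` because the thickenings of a closed set decrease to it.
-/

theorem tendsto_measure_thickening_diff_of_isClosed {α : Type*} [PseudoMetricSpace α]
    [MeasurableSpace α] [OpensMeasurableSpace α] (μ : Measure α) [IsFiniteMeasure μ]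
    {F : Set α} (hF : IsClosed F) :
    Tendsto (fun δ => μ (thickening δ F \ F)) (𝓝[>] 0) (𝓝 0) := by
  have hlim := ENNReal.Tendsto.sub
    (tendsto_measure_thickening_of_isClosed ⟨1, one_pos, measure_ne_top μ _⟩ hF)
    (tendsto_const_nhds (x := μ F)) (Or.inl (measure_ne_top μ F))
  rw [tsub_self] at hlim
  refine hlim.congr' ?_
  filter_upwards [self_mem_nhdsWithin] with δ hδ
  rw [measure_sdiff (self_subset_thickening hδ F) hF.measurableSet.nullMeasurableSet
    (measure_ne_top μ F)]

theorem ENNReal.tendsto_nhds_zero_of_le_add {ι : Type*} {l : Filter ι} {f : ι → ℝ≥0∞}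
    {a : ℝ → ℝ≥0∞} {b : ℝ → ι → ℝ≥0∞} (ha : Tendsto a (𝓝[>] 0) (𝓝 0))
    (hb : ∀ δ : ℝ, 0 < δ → Tendsto (b δ) l (𝓝 0)) (hf : ∀ δ : ℝ, 0 < δ → ∀ i, f i ≤ a δ + b δ i) :
    Tendsto f l (𝓝 0) := by
  rw [ENNReal.tendsto_nhds_zero]
  intro ε hε
  have hε2 : 0 < ε / 2 := ENNReal.half_pos hε.ne'
  obtain ⟨δ, haδ, hδ⟩ := ((ha.eventually (gt_mem_nhds hε2)).and self_mem_nhdsWithin).exists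
  filter_upwards [(hb δ hδ).eventually (gt_mem_nhds hε2)] with i hbi
  calc f i ≤ a δ + b δ i := hf δ hδ i
    _ ≤ ε / 2 + ε / 2 := add_le_add haδ.le hbi.le
    _ = ε := ENNReal.add_halves ε

theorem preimage_inter_preimage_compl_subset_s8 {Ω E : Type*} [PseudoMetricSpace E]
    (X Y : Ω → E) (O : Set E) (δ : ℝ) :
    X ⁻¹' O ∩ Y ⁻¹' Oᶜ ⊆ X ⁻¹' (thickening δ Oᶜ \ Oᶜ) ∪ {ω | δ ≤ dist (X ω) (Y ω)} := by
  rintro ω ⟨hXω, hYω⟩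
  by_cases hdist : δ ≤ dist (X ω) (Y ω)
  · exact Or.inr hdist
  · exact Or.inl ⟨mem_thickening_iff.2 ⟨Y ω, hYω, not_le.1 hdist⟩, not_not.2 hXω⟩

theorem stmt8_general {Ω E : Type*} [MeasurableSpace Ω] [MetricSpace E]
    [MeasurableSpace E] [BorelSpace E]
    (P : Measure Ω) [IsProbabilityMeasure P]
    (X : Ω → E) (Xn : ℕ → Ω → E)
    (hX : Measurable X)
    (h : ∀ ε : ℝ, 0 < ε →
      Tendsto (fun n => P {ω | ε ≤ dist (X ω) (Xn n ω)}) atTop (𝓝 0)) :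
    ∀ O : Set E, IsOpen O →
      Tendsto (fun n => P (X ⁻¹' O ∩ Xn n ⁻¹' Oᶜ)) atTop (𝓝 0) := by
  intro O hO
  refine ENNReal.tendsto_nhds_zero_of_le_add
    (tendsto_measure_thickening_diff_of_isClosed (P.map X) hO.isClosed_compl) h fun δ _ n => ?_
  rw [Measure.map_apply hX (isOpen_thickening.measurableSet.diff
    hO.isClosed_compl.measurableSet)]
  exact (measure_mono (preimage_inter_preimage_compl_subset_s8 X (Xn n) O δ)).trans
    (measure_union_le _ _)

theorem stmt8 {Ω E : Type*} [MeasurableSpace Ω] [MetricSpace E]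
    [MeasurableSpace E] [BorelSpace E]
    (P : Measure Ω) [IsProbabilityMeasure P]
    (X : Ω → E) (Xn : ℕ → Ω → E)
    (hX : Measurable X) (hXn : ∀ n, Measurable (Xn n))
    (houter : ∀ A : Set E, MeasurableSet A → ∀ ε : ℝ≥0∞, 0 < ε →
      ∃ O : Set E, IsOpen O ∧ A ⊆ O ∧ P (X ⁻¹' (O \ A)) < ε)
    (hLindelof : ∃ N : Set Ω, P N = 0 ∧ IsLindelof (X '' Nᶜ))
    (h : ∀ ε : ℝ, 0 < ε →
      Tendsto (fun n => P {ω | ε ≤ dist (X ω) (Xn n ω)}) atTop (𝓝 0)) :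
    ∀ O : Set E, IsOpen O →
      Tendsto (fun n => P (X ⁻¹' O ∩ Xn n ⁻¹' Oᶜ)) atTop (𝓝 0) :=
  stmt8_general P X Xn hX h
end

section
/- Let E be a second-countable topological space (with countable base 𝔅). For B ∈ 𝔅, rationals a < b, and m ∈ ℕ, let [B,a,b,m] := {h ∈ C_b(E) : h(B) ⊆ (a,b), ‖h‖_∞ < m}. Then the collection 𝒩 of finite intersections of such sets is a countable family, and for the topology of pointwise convergence on C_b(E), 𝒩 is a network: for every f ∈ C_b(E) and every open neighborhood O of f there is N ∈ 𝒩 with f ∈ N ⊆ O. -/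
open Filter Topology TopologicalSpace

/-- The basic set `[B,a,b,m] = {h ∈ C_b(E) : h(B) ⊆ (a,b), ‖h‖ < m}`. -/
def basicSet {E : Type*} [TopologicalSpace E] (B : Set E) (a b : ℚ) (m : ℕ) :
    Set (BoundedContinuousFunction E ℝ) :=
  {h | (∀ x ∈ B, h x ∈ Set.Ioo (a : ℝ) (b : ℝ)) ∧ ‖h‖ < m}

/-- The collection of finite intersections of basic sets with `B` in the base `𝔅`. -/
def netFamily {E : Type*} [TopologicalSpace E] (𝔅 : Set (Set E)) :
    Set (Set (BoundedContinuousFunction E ℝ)) :=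
  {N | ∃ F : Finset (Set E × ℚ × ℚ × ℕ), (∀ p ∈ F, p.1 ∈ 𝔅 ∧ p.2.1 < p.2.2.1) ∧
    N = ⋂ p ∈ F, basicSet p.1 p.2.1 p.2.2.1 p.2.2.2}

theorem stmt14 {E : Type*} [TopologicalSpace E]
    (𝔅 : Set (Set E)) (hcount : 𝔅.Countable)
    (hbasis : IsTopologicalBasis 𝔅) :
    (netFamily 𝔅).Countable ∧
    ∀ f : BoundedContinuousFunction E ℝ,
      ∀ O : Set (BoundedContinuousFunction E ℝ),
        IsOpen[TopologicalSpace.induced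
          (fun h : BoundedContinuousFunction E ℝ => (h : E → ℝ))
          Pi.topologicalSpace] O →
        f ∈ O → ∃ N ∈ netFamily 𝔅, f ∈ N ∧ N ⊆ O := by
  classical
  constructor
  · -- countability
    set S : Set (Set E × ℚ × ℚ × ℕ) := {p | p.1 ∈ 𝔅 ∧ p.2.1 < p.2.2.1} with hS
    have hScount : S.Countable := by
      have : S ⊆ 𝔅 ×ˢ (Set.univ : Set (ℚ × ℚ × ℕ)) := by
        rintro ⟨B, a, b, m⟩ ⟨h1, _⟩
        exact ⟨h1, trivial⟩
      exact (hcount.prod Set.countable_univ).mono this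
    have hF : {F : Finset (Set E × ℚ × ℚ × ℕ) | (F : Set (Set E × ℚ × ℚ × ℕ)) ⊆ S}.Countable := by
      have := Set.countable_setOf_finite_subset hScount
      have hinj : Set.InjOn (fun F : Finset (Set E × ℚ × ℚ × ℕ) =>
          (F : Set (Set E × ℚ × ℚ × ℕ)))
          {F | (F : Set (Set E × ℚ × ℚ × ℕ)) ⊆ S} := by
        intro F1 _ F2 _ h
        exact_mod_cast Finset.coe_injective h
      refine Set.countable_of_injective_of_countable_image hinj (Set.Countable.mono ?_ this)
      rintro _ ⟨F, hF, rfl⟩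
      exact ⟨F.finite_toSet, hF⟩
    have : netFamily 𝔅 ⊆ (fun F : Finset (Set E × ℚ × ℚ × ℕ) =>
        ⋂ p ∈ F, basicSet p.1 p.2.1 p.2.2.1 p.2.2.2) ''
        {F | (F : Set (Set E × ℚ × ℚ × ℕ)) ⊆ S} := by
      rintro N ⟨F, h1, rfl⟩
      exact ⟨F, fun p hp => h1 p hp, rfl⟩
    exact (hF.image _).mono this
  · intro f O hO hfO
    rw [isOpen_induced_iff] at hO
    obtain ⟨U, hU, rfl⟩ := hO
    obtain ⟨I, V, hV, hpi⟩ := isOpen_pi_iff.1 hU _ hfO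
    -- for each x ∈ I choose rationals and a basic set
    have key : ∀ x ∈ I, ∃ (a b : ℚ) (B : Set E), a < b ∧ B ∈ 𝔅 ∧ x ∈ B ∧
        (∀ y ∈ B, f y ∈ Set.Ioo (a : ℝ) (b : ℝ)) ∧ Set.Ioo (a : ℝ) (b : ℝ) ⊆ V x := by
      intro x hx
      obtain ⟨hVo, hfx⟩ := hV x hx
      obtain ⟨ε, hε, hball⟩ := Metric.isOpen_iff.1 hVo _ hfx
      obtain ⟨a, ha1, ha2⟩ := exists_rat_btwn (show f x - ε < f x by linarith)
      obtain ⟨b, hb1, hb2⟩ := exists_rat_btwn (show f x < f x + ε by linarith)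
      have hIoo : Set.Ioo (a : ℝ) (b : ℝ) ⊆ V x := by
        intro y hy
        apply hball
        rw [Metric.mem_ball, Real.dist_eq, abs_lt]
        constructor <;> [linarith [hy.1]; linarith [hy.2]]
      have hopen : IsOpen (f ⁻¹' Set.Ioo (a : ℝ) (b : ℝ)) :=
        f.continuous.isOpen_preimage _ isOpen_Ioo
      have hxmem : x ∈ f ⁻¹' Set.Ioo (a : ℝ) (b : ℝ) := ⟨ha2, hb1⟩
      obtain ⟨B, hB𝔅, hxB, hBsub⟩ := hbasis.exists_subset_of_mem_open hxmem hopen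
      exact ⟨a, b, B, by exact_mod_cast ha2.trans hb1, hB𝔅, hxB,
        fun y hy => hBsub hy, hIoo⟩
    choose! a b B hab hB𝔅 hxB hfB hIooV using key
    set m : ℕ := ⌊‖f‖⌋₊ + 1 with hm
    have hfm : ‖f‖ < m := by exact_mod_cast Nat.lt_floor_add_one ‖f‖
    refine ⟨⋂ p ∈ I.image (fun x => (B x, a x, b x, m)),
        basicSet p.1 p.2.1 p.2.2.1 p.2.2.2, ?_, ?_, ?_⟩
    · exact ⟨_, by
        simp only [Finset.mem_image]
        rintro p ⟨x, hx, rfl⟩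
        exact ⟨hB𝔅 x hx, hab x hx⟩, rfl⟩
    · -- f ∈ N
      simp only [Set.mem_iInter, Finset.mem_image]
      rintro p ⟨x, hx, rfl⟩
      exact ⟨hfB x hx, hfm⟩
    · -- N ⊆ O
      intro h hh
      simp only [Set.mem_iInter, Finset.mem_image] at hh
      apply hpi
      intro x hx
      have := (hh _ ⟨x, hx, rfl⟩).1 x (hxB x hx)
      exact hIooV x hx this
end

section
/- Let E be a non-compact polish space. Then the strict topology β on C_b(E) (generated by the seminorms ρ_u(f) = ‖uf‖_∞ for u ∈ H⁺(E)) is not metrizable; equivalently, the zero function has no countable neighborhood basis in (C_b(E),β). -/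
open Filter Topology
open scoped ENNReal

/-- `H⁺(E)`: nonnegative functions whose superlevel sets `{u ≥ α}` are compact
for every `α > 0`. -/
def Hplus (E : Type*) [TopologicalSpace E] : Set (E → ℝ) :=
  {u | (∀ x, 0 ≤ u x) ∧ ∀ α : ℝ, 0 < α → IsCompact {x | α ≤ u x}}

/-- The seminorm `ρ_u(f) = ‖u f‖_∞` (valued in `ℝ≥0∞`). -/
noncomputable def strictSeminorm {E : Type*} [TopologicalSpace E]
    (u : E → ℝ) (f : BoundedContinuousFunction E ℝ) : ℝ≥0∞ :=
  ⨆ x : E, ENNReal.ofReal (u x * |f x|)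

/-- The strict topology `β` on `C_b(E)`, generated by the balls of the
seminorms `ρ_u`, `u ∈ H⁺(E)`. -/
noncomputable def strictTopology (E : Type*) [TopologicalSpace E] :
    TopologicalSpace (BoundedContinuousFunction E ℝ) :=
  TopologicalSpace.generateFrom
    {S | ∃ u ∈ Hplus E, ∃ g : BoundedContinuousFunction E ℝ, ∃ r : ℝ, 0 < r ∧
      S = {f | strictSeminorm u (f - g) < ENNReal.ofReal r}}

/-!
If the neighbourhoods of `0` had a countable basis, it could be taken to consist of balls
`{ρ_{u_n} < ε_n}`. Since `E` is not compact, each `u_n` is small somewhere, say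
`u_n (y_n) < ε_n / 2(n+1)`. The weight `û` with value `1/(n+1)` at `y_n` for the first such `n`
(and `0` off the sequence) lies in `H⁺(E)`, because its superlevel sets are finite. A bump of
height `n+1` at `y_n`, supported where `u_n` is small, lies in the `n`-th ball but has `ρ_û ≥ 1`,
so no ball of the sequence fits into the `û`-ball of radius `1`.
-/

open Set
open scoped BoundedContinuousFunction

namespace StrictTopology

variable {E : Type*}

open Classical in
noncomputable def seqWeight (y : ℕ → E) (z : E) : ℝ :=
  if h : ∃ n, y n = z then ((Nat.find h : ℝ) + 1)⁻¹ else 0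

lemma inv_succ_le_seqWeight (y : ℕ → E) (n : ℕ) : ((n : ℝ) + 1)⁻¹ ≤ seqWeight y (y n) := by
  classical
  have h : ∃ m, y m = y n := ⟨n, rfl⟩
  rw [seqWeight, dif_pos h]
  gcongr
  exact_mod_cast Nat.find_min' h rfl

lemma seqWeight_superlevel_subset (y : ℕ → E) {α : ℝ} (hα : 0 < α) :
    {z | α ≤ seqWeight y z} ⊆ y '' Iic ⌊α⁻¹⌋₊ := by
  classical
  intro z (hz : α ≤ seqWeight y z)
  rw [seqWeight] at hz
  split_ifs at hz with h
  · refine ⟨Nat.find h, Nat.le_floor ?_, Nat.find_spec h⟩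
    have := (le_inv_comm₀ hα (by positivity)).1 hz
    linarith
  · exact absurd hz (not_le.2 hα)

variable [TopologicalSpace E]

def ball (u : E → ℝ) (ε : ℝ) : Set (E →ᵇ ℝ) :=
  {f | strictSeminorm u f < ENNReal.ofReal ε}

lemma ofReal_le_strictSeminorm (u : E → ℝ) (f : E →ᵇ ℝ) (x : E) :
    ENNReal.ofReal (u x * |f x|) ≤ strictSeminorm u f :=
  le_iSup (fun x => ENNReal.ofReal (u x * |f x|)) x

lemma strictSeminorm_le_ofReal {u : E → ℝ} {f : E →ᵇ ℝ} {c : ℝ} (h : ∀ x, u x * |f x| ≤ c) :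
    strictSeminorm u f ≤ ENNReal.ofReal c :=
  iSup_le fun x => ENNReal.ofReal_le_ofReal (h x)

lemma strictSeminorm_zero (u : E → ℝ) : strictSeminorm u (0 : E →ᵇ ℝ) = 0 := by
  simp [strictSeminorm]

lemma strictSeminorm_add_le {u : E → ℝ} (hu : ∀ x, 0 ≤ u x) (f g : E →ᵇ ℝ) :
    strictSeminorm u (f + g) ≤ strictSeminorm u f + strictSeminorm u g := by
  refine iSup_le fun x => ?_
  have hfg : u x * |f x + g x| ≤ u x * |f x| + u x * |g x| := by
    rw [← mul_add]; exact mul_le_mul_of_nonneg_left (abs_add_le _ _) (hu x)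
  calc ENNReal.ofReal (u x * |(f + g) x|)
      ≤ ENNReal.ofReal (u x * |f x|) + ENNReal.ofReal (u x * |g x|) :=
        (ENNReal.ofReal_le_ofReal hfg).trans ENNReal.ofReal_add_le
    _ ≤ _ := add_le_add (ofReal_le_strictSeminorm u f x) (ofReal_le_strictSeminorm u g x)

lemma strictSeminorm_mono {u v : E → ℝ} (huv : u ≤ v) (f : E →ᵇ ℝ) :
    strictSeminorm u f ≤ strictSeminorm v f :=
  iSup_mono fun x => ENNReal.ofReal_le_ofReal
    (mul_le_mul_of_nonneg_right (huv x) (abs_nonneg _))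

lemma zero_mem_Hplus : (0 : E → ℝ) ∈ Hplus E :=
  ⟨fun _ => le_rfl, fun α hα => by simp [not_le.mpr hα]⟩

lemma sup_mem_Hplus {u v : E → ℝ} (hu : u ∈ Hplus E) (hv : v ∈ Hplus E) : u ⊔ v ∈ Hplus E := by
  refine ⟨fun x => le_sup_of_le_left (hu.1 x), fun α hα => ?_⟩
  have hsplit : {x | α ≤ (u ⊔ v) x} = {x | α ≤ u x} ∪ {x | α ≤ v x} := by
    ext x; simp
  rw [hsplit]
  exact (hu.2 α hα).union (hv.2 α hα)

lemma ball_subset_ball_sup_min (u v : E → ℝ) (ε δ : ℝ) :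
    ball (u ⊔ v) (min ε δ) ⊆ ball u ε ∩ ball v δ := fun f hf =>
  ⟨(strictSeminorm_mono le_sup_left f).trans_lt
      (hf.trans_le (ENNReal.ofReal_le_ofReal (min_le_left _ _))),
    (strictSeminorm_mono le_sup_right f).trans_lt
      (hf.trans_le (ENNReal.ofReal_le_ofReal (min_le_right _ _)))⟩

lemma isOpen_ball {u : E → ℝ} (hu : u ∈ Hplus E) {ε : ℝ} (hε : 0 < ε) :
    IsOpen[strictTopology E] (ball u ε) := by
  refine TopologicalSpace.isOpen_generateFrom_of_mem ⟨u, hu, 0, ε, hε, ?_⟩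
  simp [ball]

lemma zero_mem_ball (u : E → ℝ) {ε : ℝ} (hε : 0 < ε) : (0 : E →ᵇ ℝ) ∈ ball u ε := by
  simp [ball, strictSeminorm_zero, hε]

lemma exists_ball_subset_of_zero_mem {u : E → ℝ} (hu : ∀ x, 0 ≤ u x) {g : E →ᵇ ℝ} {r : ℝ}
    (h0 : strictSeminorm u (0 - g) < ENNReal.ofReal r) :
    ∃ ε > 0, ball u ε ⊆ {f | strictSeminorm u (f - g) < ENNReal.ofReal r} := by
  rw [zero_sub] at h0
  obtain ⟨ε, hε, hlt⟩ := ENNReal.lt_iff_exists_add_pos_lt.1 h0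
  refine ⟨ε, hε, fun f hf => ?_⟩
  calc strictSeminorm u (f - g)
      ≤ strictSeminorm u f + strictSeminorm u (-g) := by
        rw [sub_eq_add_neg]; exact strictSeminorm_add_le hu f (-g)
    _ < ENNReal.ofReal ε + strictSeminorm u (-g) := ENNReal.add_lt_add_right h0.ne_top hf
    _ < ENNReal.ofReal r := by rwa [ENNReal.ofReal_coe_nnreal, add_comm]

theorem hasBasis_nhds_zero :
    (@nhds (E →ᵇ ℝ) (strictTopology E) 0).HasBasis
      (fun p : (E → ℝ) × ℝ => p.1 ∈ Hplus E ∧ 0 < p.2) (fun p => ball p.1 p.2) := by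
  have hbasis := Filter.hasBasis_biInf_principal'
    (p := fun p : (E → ℝ) × ℝ => p.1 ∈ Hplus E ∧ 0 < p.2) (s := fun p => ball p.1 p.2)
    (fun p hp q hq => ⟨(p.1 ⊔ q.1, min p.2 q.2), ⟨sup_mem_Hplus hp.1 hq.1, lt_min hp.2 hq.2⟩,
      subset_inter_iff.1 (ball_subset_ball_sup_min _ _ _ _)⟩)
    ⟨(0, 1), zero_mem_Hplus, one_pos⟩
  convert hbasis using 1
  refine le_antisymm (le_iInf₂ fun p hp => ?_) ?_
  · exact le_principal_iff.2
      (@IsOpen.mem_nhds _ (strictTopology E) _ _ (isOpen_ball hp.1 hp.2) (zero_mem_ball p.1 hp.2))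
  · rw [strictTopology, TopologicalSpace.nhds_generateFrom]
    refine le_iInf₂ fun S ⟨h0S, u, hu, g, r, _, hS⟩ => ?_
    subst hS
    obtain ⟨ε, hε, hsub⟩ := exists_ball_subset_of_zero_mem hu.1 h0S
    exact le_principal_iff.2 (hbasis.mem_iff.2 ⟨(u, ε), ⟨hu, hε⟩, hsub⟩)

lemma exists_lt_of_not_compactSpace (hnc : ¬ CompactSpace E) {u : E → ℝ} (hu : u ∈ Hplus E)
    {c : ℝ} (hc : 0 < c) : ∃ y, u y < c := by
  by_contra! h
  exact hnc (isCompact_univ_iff.1 (by simpa [h] using hu.2 c hc))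

lemma seqWeight_mem_Hplus (y : ℕ → E) : seqWeight y ∈ Hplus E := by
  refine ⟨fun z => ?_, fun α hα => ?_⟩
  · unfold seqWeight; split_ifs <;> positivity
  · exact (((finite_Iic _).image y).subset (seqWeight_superlevel_subset y hα)).isCompact

lemma exists_bump_strictSeminorm_le [T2Space E] [CompletelyRegularSpace E] {u : E → ℝ}
    (hu : u ∈ Hplus E) {y : E} {c : ℝ} (hy : u y < c) {M : ℝ} (hM : 0 ≤ M) :
    ∃ f : E →ᵇ ℝ, f y = M ∧ strictSeminorm u f ≤ ENNReal.ofReal (c * M) := by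
  have hc : 0 < c := (hu.1 y).trans_lt hy
  have hK : IsClosed {z | c ≤ u z} := (hu.2 c hc).isClosed
  obtain ⟨g, hg, hgy, hgK⟩ :=
    CompletelyRegularSpace.completely_regular y _ hK (not_le.2 hy)
  have hφ : ∀ z, ‖M * (1 - (g z : ℝ))‖ ≤ M := fun z => by
    rw [Real.norm_eq_abs, abs_of_nonneg (mul_nonneg hM (unitInterval.one_minus_nonneg _))]
    exact mul_le_of_le_one_right hM (unitInterval.one_minus_le_one _)
  refine ⟨.ofNormedAddCommGroup _ (by fun_prop) M hφ, by simp [hgy], ?_⟩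
  refine strictSeminorm_le_ofReal fun z => ?_
  by_cases hz : c ≤ u z
  · have : (g z : ℝ) = 1 := congrArg Subtype.val (hgK hz)
    simp [this, mul_nonneg hc.le hM]
  · rw [← Real.norm_eq_abs]
    exact mul_le_mul (not_le.1 hz).le (hφ z) (norm_nonneg _) hc.le

theorem exists_mem_Hplus_forall_not_ball_subset [T2Space E] [CompletelyRegularSpace E]
    (hnc : ¬ CompactSpace E) {u : ℕ → E → ℝ} (hu : ∀ n, u n ∈ Hplus E) {ε : ℕ → ℝ}
    (hε : ∀ n, 0 < ε n) : ∃ v ∈ Hplus E, ∀ n, ¬ ball (u n) (ε n) ⊆ ball v 1 := by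
  choose y hy using fun n =>
    exists_lt_of_not_compactSpace hnc (hu n) (c := ε n / 2 / (n + 1)) (by have := hε n; positivity)
  refine ⟨seqWeight y, seqWeight_mem_Hplus y, fun n hsub => ?_⟩
  obtain ⟨f, hfy, hf⟩ := exists_bump_strictSeminorm_le (hu n) (hy n) (M := n + 1) (by positivity)
  have hf_mem : f ∈ ball (u n) (ε n) := by
    refine hf.trans_lt ((ENNReal.ofReal_lt_ofReal_iff (hε n)).2 ?_)
    have := hε n
    field_simp
    linarith
  have hv : (1 : ℝ) ≤ seqWeight y (y n) * |f (y n)| := by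
    rw [hfy, abs_of_pos (by positivity)]
    calc (1 : ℝ) = ((n : ℝ) + 1)⁻¹ * (n + 1) := by field_simp
      _ ≤ _ := by gcongr; exact inv_succ_le_seqWeight y n
  exact (hsub hf_mem).not_ge
    ((ENNReal.ofReal_le_ofReal hv).trans (ofReal_le_strictSeminorm _ f (y n)))

end StrictTopology

open StrictTopology in
theorem stmt18 {E : Type*} [TopologicalSpace E] [PolishSpace E]
    (hnc : ¬ CompactSpace E) :
    ¬ (@nhds (BoundedContinuousFunction E ℝ) (strictTopology E) 0).IsCountablyGenerated := by
  intro hcg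
  obtain ⟨p, hp, hbasis⟩ := (hasBasis_nhds_zero (E := E)).exists_antitone_subbasis
  obtain ⟨v, hv, hnot⟩ :=
    exists_mem_Hplus_forall_not_ball_subset hnc (fun n => (hp n).1) (fun n => (hp n).2)
  obtain ⟨N, -, hN⟩ :=
    hbasis.toHasBasis.mem_iff.1 (hasBasis_nhds_zero.mem_of_mem (i := (v, 1)) ⟨hv, one_pos⟩)
  exact hnot N hN
end
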